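/- Let k ≥ 0. The sequence 𝒫_{k+3} →∇→ 𝐏_{k+2} →∇×→ 𝐏_{k+1} →∇·→ 𝒫_k on ℝ³ is exact: (i) the kernel of ∇ on 𝒫_{k+3} consists exactly of the constants; (ii) ∇𝒫_{k+3} = {v ∈ 𝐏_{k+2} : ∇×v = 0}; (iii) ∇×𝐏_{k+2} = {v ∈ 𝐏_{k+1} : ∇·v = 0}; (iv) ∇· maps 𝐏_{k+1} onto 𝒫_k. -/

import Mathlib

open MvPolynomial

/-- Polynomials on `ℝ³`. -/
abbrev R3 := MvPolynomial (Fin 3) ℝ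

/-- Polynomial vector fields on `ℝ³`. -/
abbrev Vec3 := R3 × R3 × R3

/-- The gradient `∇p = (∂ₓ p, ∂_y p, ∂_z p)`. -/
noncomputable def grad3 (p : R3) : Vec3 := (pderiv 0 p, pderiv 1 p, pderiv 2 p)

/-- The three-dimensional vector curl. -/
noncomputable def curl3 (v : Vec3) : Vec3 :=
  (pderiv 1 v.2.2 - pderiv 2 v.2.1,
   pderiv 2 v.1 - pderiv 0 v.2.2,
   pderiv 0 v.2.1 - pderiv 1 v.1)

/-- The divergence `∇·v = ∂ₓ v₁ + ∂_y v₂ + ∂_z v₃`. -/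
noncomputable def div3 (v : Vec3) : R3 :=
  pderiv 0 v.1 + pderiv 1 v.2.1 + pderiv 2 v.2.2

/-- Membership in `𝐏_m`: all three components of total degree at most `m`. -/
def memP3 (m : ℕ) (v : Vec3) : Prop :=
  v.1.totalDegree ≤ m ∧ v.2.1.totalDegree ≤ m ∧ v.2.2.totalDegree ≤ m



/-- Monomial-wise antiderivative in direction `i`. -/
noncomputable def integ (i : Fin 3) (p : R3) : R3 :=
  Finsupp.sum (AddMonoidAlgebra.coeff p) fun m c => monomial (m + Finsupp.single i 1) (c / (m i + 1))

lemma integ_monomial (i : Fin 3) (m : Fin 3 →₀ ℕ) (c : ℝ) :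
    integ i (monomial m c) = monomial (m + Finsupp.single i 1) (c / (m i + 1)) := by
  unfold integ
  rw [sum_monomial_eq]
  simp

lemma integ_add (i : Fin 3) (p q : R3) : integ i (p + q) = integ i p + integ i q := by
  unfold integ
  exact Finsupp.sum_add_index' (fun m => by simp) (fun m b₁ b₂ => by rw [add_div, map_add])

lemma integ_zero (i : Fin 3) : integ i 0 = 0 := by
  unfold integ; simp

lemma integ_neg (i : Fin 3) (p : R3) : integ i (-p) = -(integ i p) := by
  have h := integ_add i p (-p)
  rw [add_neg_cancel, integ_zero] at h
  exact eq_neg_of_add_eq_zero_right h.symm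

lemma pderiv_integ (i : Fin 3) (p : R3) : pderiv i (integ i p) = p := by
  induction p using MvPolynomial.induction_on' with
  | monomial m c =>
    rw [integ_monomial, pderiv_monomial, add_tsub_cancel_right]
    congr 1
    have h0 : ((m + Finsupp.single i 1) : Fin 3 →₀ ℕ) i = m i + 1 := by
      simp
    rw [h0]
    push_cast
    have : ((m i : ℝ) + 1) ≠ 0 := by positivity
    field_simp
  | add p q hp hq => rw [integ_add, map_add, hp, hq]

lemma pderiv_integ_comm (i j : Fin 3) (h : j ≠ i) (p : R3) :
    pderiv j (integ i p) = integ i (pderiv j p) := by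
  induction p using MvPolynomial.induction_on' with
  | monomial m c =>
    rw [integ_monomial, pderiv_monomial, pderiv_monomial, integ_monomial]
    have e1 : (m + Finsupp.single i 1) - Finsupp.single j 1
        = (m - Finsupp.single j 1) + Finsupp.single i 1 := by
      ext a
      simp only [Finsupp.tsub_apply, Finsupp.add_apply, Finsupp.single_apply]
      split_ifs with h1 h2 <;> omega
    have e2 : ((m + Finsupp.single i 1) : Fin 3 →₀ ℕ) j = m j := by
      simp [Finsupp.single_apply, Ne.symm h]
    have e3 : ((m - Finsupp.single j 1) : Fin 3 →₀ ℕ) i = m i := by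
      simp [Finsupp.tsub_apply, Finsupp.single_apply, h]
    rw [e1, e2, e3]
    congr 1
    ring
  | add p q hp hq => rw [integ_add, map_add, map_add, integ_add, hp, hq]

lemma pderiv_comm3 (i j : Fin 3) (p : R3) :
    pderiv i (pderiv j p) = pderiv j (pderiv i p) := by
  rcases eq_or_ne i j with rfl | hij
  · rfl
  induction p using MvPolynomial.induction_on' with
  | monomial m c =>
    rw [pderiv_monomial, pderiv_monomial, pderiv_monomial, pderiv_monomial]
    have e1 : m - Finsupp.single j 1 - Finsupp.single i 1
        = m - Finsupp.single i 1 - Finsupp.single j 1 := tsub_right_comm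
    have e2 : ((m - Finsupp.single j 1) : Fin 3 →₀ ℕ) i = m i := by
      simp [Finsupp.tsub_apply, Finsupp.single_apply, Ne.symm hij]
    have e3 : ((m - Finsupp.single i 1) : Fin 3 →₀ ℕ) j = m j := by
      simp [Finsupp.tsub_apply, Finsupp.single_apply, hij]
    rw [e1, e2, e3]
    congr 1
    ring
  | add p q hp hq => rw [map_add, map_add, map_add, map_add, hp, hq]

lemma totalDegree_integ_le (i : Fin 3) (p : R3) :
    (integ i p).totalDegree ≤ p.totalDegree + 1 := by
  unfold integ
  rw [Finsupp.sum]
  refine totalDegree_finsetSum_le fun m hm => ?_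
  refine (totalDegree_monomial_le _ _).trans ?_
  have h1 : ((m + Finsupp.single i 1).sum fun _ => id)
      = (m.sum fun _ => id) + 1 := by
    rw [Finsupp.sum_add_index' (fun _ => rfl) (fun _ _ _ => rfl),
      Finsupp.sum_single_index rfl]
    rfl
  rw [h1]
  exact add_le_add_left (le_totalDegree hm) 1

lemma totalDegree_pderiv_le (i : Fin 3) (p : R3) {d : ℕ} (h : p.totalDegree ≤ d + 1) :
    (pderiv i p).totalDegree ≤ d := by
  conv_lhs => rw [p.as_sum]
  rw [map_sum]
  refine totalDegree_finsetSum_le fun m hm => ?_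
  rw [pderiv_monomial]
  rcases Nat.eq_zero_or_pos (m i) with h0 | h0
  · simp [h0]
  · refine (totalDegree_monomial_le _ _).trans ?_
    have hle : Finsupp.single i 1 ≤ m := Finsupp.single_le_iff.mpr h0
    have hm' : (m - Finsupp.single i 1) + Finsupp.single i 1 = m :=
      tsub_add_cancel_of_le hle
    have h2 : ((m - Finsupp.single i 1).sum fun _ => id) + 1 = m.sum fun _ => id := by
      conv_rhs => rw [← hm']
      rw [Finsupp.sum_add_index' (fun _ => rfl) (fun _ _ _ => rfl),
        Finsupp.sum_single_index rfl]
      rfl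
    have h3 : (m.sum fun _ => id) ≤ d + 1 := (le_totalDegree hm).trans h
    omega

lemma coeff_pderiv (i : Fin 3) (n : Fin 3 →₀ ℕ) (p : R3) :
    coeff n (pderiv i p) = ((n i : ℝ) + 1) * coeff (n + Finsupp.single i 1) p := by
  induction p using MvPolynomial.induction_on' with
  | monomial m c =>
    rw [pderiv_monomial, coeff_monomial, coeff_monomial]
    rcases eq_or_ne m (n + Finsupp.single i 1) with rfl | hne
    · rw [if_pos rfl, if_pos (add_tsub_cancel_right _ _), Finsupp.add_apply,
        Finsupp.single_apply, if_pos rfl]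
      push_cast
      ring
    · rw [if_neg hne, mul_zero]
      rcases Nat.eq_zero_or_pos (m i) with h0 | h0
      · split_ifs <;> simp [h0]
      · rw [if_neg]
        intro heq
        apply hne
        rw [← heq, tsub_add_cancel_of_le (Finsupp.single_le_iff.mpr h0)]
  | add p q hp hq => rw [map_add, coeff_add, coeff_add, hp, hq, mul_add]

lemma eq_C_of_pderiv_eq_zero (p : R3) (h : ∀ i, pderiv i p = 0) :
    p = C (coeff 0 p) := by
  ext m
  rcases eq_or_ne m 0 with rfl | hm
  · simp
  · rw [coeff_C, if_neg (Ne.symm hm)]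
    obtain ⟨i, hi⟩ : ∃ i, m i ≠ 0 := by
      by_contra hc
      push_neg at hc
      exact hm (Finsupp.ext fun i => hc i)
    have hk := coeff_pderiv i (m - Finsupp.single i 1) p
    rw [h i, tsub_add_cancel_of_le
      (Finsupp.single_le_iff.mpr (Nat.one_le_iff_ne_zero.mpr hi))] at hk
    have hne : ((((m - Finsupp.single i 1) : Fin 3 →₀ ℕ) i : ℝ) + 1) ≠ 0 := by positivity
    rw [coeff_zero] at hk
    rcases mul_eq_zero.mp hk.symm with h' | h'
    · exact absurd h' hne
    · exact h'

lemma totalDegree_sub_le' (p q : R3) {d : ℕ} (hp : p.totalDegree ≤ d)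
    (hq : q.totalDegree ≤ d) : (p - q).totalDegree ≤ d := by
  rw [sub_eq_add_neg]
  refine (totalDegree_add _ _).trans (max_le hp ?_)
  rwa [totalDegree_neg]

/-- The sequence `𝒫_{k+3} →∇→ 𝐏_{k+2} →∇×→ 𝐏_{k+1} →∇·→ 𝒫_k` on `ℝ³` is exact:
(i) the kernel of `∇` on `𝒫_{k+3}` consists exactly of the constants;
(ii) `∇𝒫_{k+3} = {v ∈ 𝐏_{k+2} : ∇×v = 0}`;
(iii) `∇×𝐏_{k+2} = {v ∈ 𝐏_{k+1} : ∇·v = 0}`;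
(iv) `∇·` maps `𝐏_{k+1}` onto `𝒫_k`. -/
theorem stmt_5 (k : ℕ) :
    (∀ p : R3, p.totalDegree ≤ k + 3 → (grad3 p = 0 ↔ ∃ c : ℝ, p = C c)) ∧
    ({v : Vec3 | ∃ p : R3, p.totalDegree ≤ k + 3 ∧ v = grad3 p} =
      {v : Vec3 | memP3 (k + 2) v ∧ curl3 v = 0}) ∧
    ({w : Vec3 | ∃ v : Vec3, memP3 (k + 2) v ∧ w = curl3 v} =
      {w : Vec3 | memP3 (k + 1) w ∧ div3 w = 0}) ∧
    (∀ q : R3, q.totalDegree ≤ k →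
      ∃ v : Vec3, memP3 (k + 1) v ∧ div3 v = q) := by
  refine ⟨?_, ?_, ?_, ?_⟩
  · -- (i)
    intro p _
    constructor
    · intro hg
      simp only [grad3, Prod.mk_eq_zero] at hg
      obtain ⟨h0, h1, h2⟩ := hg
      refine ⟨coeff 0 p, eq_C_of_pderiv_eq_zero p fun i => ?_⟩
      fin_cases i
      · exact h0
      · exact h1
      · exact h2
    · rintro ⟨c, rfl⟩
      simp [grad3, pderiv_C, Prod.mk_eq_zero]
  · -- (ii)
    ext v
    obtain ⟨v1, v2, v3⟩ := v
    simp only [Set.mem_setOf_eq]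
    constructor
    · rintro ⟨p, hp, hv⟩
      rw [hv]
      refine ⟨⟨totalDegree_pderiv_le _ _ hp, totalDegree_pderiv_le _ _ hp,
        totalDegree_pderiv_le _ _ hp⟩, ?_⟩
      simp only [curl3, grad3]
      rw [pderiv_comm3 1 2, pderiv_comm3 2 0, pderiv_comm3 0 1]
      simp [Prod.mk_eq_zero]
    · rintro ⟨⟨h1, h2, h3⟩, hc⟩
      replace h1 : v1.totalDegree ≤ k + 2 := h1
      replace h2 : v2.totalDegree ≤ k + 2 := h2
      replace h3 : v3.totalDegree ≤ k + 2 := h3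
      simp only [curl3, Prod.mk_eq_zero] at hc
      obtain ⟨hc1, hc2, hc3⟩ := hc
      rw [sub_eq_zero] at hc1 hc2 hc3
      set p1 := integ 0 v1 with hp1
      set w2 := v2 - pderiv 1 p1 with hw2
      set w3 := v3 - pderiv 2 p1 with hw3
      set p2 := integ 1 w2 with hp2
      set u3 := w3 - pderiv 2 p2 with hu3
      set p3 := integ 2 u3 with hp3
      have d01 : pderiv 0 p1 = v1 := pderiv_integ 0 v1
      have dw2 : pderiv 0 w2 = 0 := by
        rw [hw2, map_sub, pderiv_comm3 0 1, d01, hc3, sub_self]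
      have dw3 : pderiv 0 w3 = 0 := by
        rw [hw3, map_sub, pderiv_comm3 0 2, d01, ← hc2, sub_self]
      have d12 : pderiv 1 p2 = w2 := pderiv_integ 1 w2
      have d02 : pderiv 0 p2 = 0 := by
        rw [hp2, pderiv_integ_comm 1 0 (by decide), dw2, integ_zero]
      have du1 : pderiv 1 u3 = 0 := by
        rw [hu3, map_sub, pderiv_comm3 1 2, d12, hw3, hw2, map_sub, map_sub, hc1,
          pderiv_comm3 1 2]
        ring
      have du0 : pderiv 0 u3 = 0 := by
        rw [hu3, map_sub, dw3, pderiv_comm3 0 2, d02, map_zero, sub_self]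
      have d23 : pderiv 2 p3 = u3 := pderiv_integ 2 u3
      have d03 : pderiv 0 p3 = 0 := by
        rw [hp3, pderiv_integ_comm 2 0 (by decide), du0, integ_zero]
      have d13 : pderiv 1 p3 = 0 := by
        rw [hp3, pderiv_integ_comm 2 1 (by decide), du1, integ_zero]
      have hdeg1 : p1.totalDegree ≤ k + 3 :=
        (totalDegree_integ_le 0 v1).trans (by omega)
      have hw2d : w2.totalDegree ≤ k + 2 :=
        totalDegree_sub_le' _ _ h2 (totalDegree_pderiv_le 1 p1 hdeg1)
      have hw3d : w3.totalDegree ≤ k + 2 :=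
        totalDegree_sub_le' _ _ h3 (totalDegree_pderiv_le 2 p1 hdeg1)
      have hdeg2 : p2.totalDegree ≤ k + 3 :=
        (totalDegree_integ_le 1 w2).trans (by omega)
      have hu3d : u3.totalDegree ≤ k + 2 :=
        totalDegree_sub_le' _ _ hw3d (totalDegree_pderiv_le 2 p2 hdeg2)
      have hdeg3 : p3.totalDegree ≤ k + 3 :=
        (totalDegree_integ_le 2 u3).trans (by omega)
      refine ⟨p1 + p2 + p3, ?_, ?_⟩
      · exact (totalDegree_add _ _).trans (max_le
          ((totalDegree_add _ _).trans (max_le hdeg1 hdeg2)) hdeg3)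
      · simp only [grad3, map_add, d01, d02, d03, d12, d13, d23, Prod.mk.injEq]
        refine ⟨by ring, ?_, ?_⟩
        · rw [hw2]; ring
        · rw [hu3, hw3]; ring
  · -- (iii)
    ext w
    obtain ⟨w1, w2, w3⟩ := w
    simp only [Set.mem_setOf_eq]
    constructor
    · rintro ⟨v, ⟨h1, h2, h3⟩, hv⟩
      rw [hv]
      refine ⟨⟨totalDegree_sub_le' _ _ (totalDegree_pderiv_le _ _ h3)
          (totalDegree_pderiv_le _ _ h2),
        totalDegree_sub_le' _ _ (totalDegree_pderiv_le _ _ h1)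
          (totalDegree_pderiv_le _ _ h3),
        totalDegree_sub_le' _ _ (totalDegree_pderiv_le _ _ h2)
          (totalDegree_pderiv_le _ _ h1)⟩, ?_⟩
      simp only [div3, curl3, map_sub]
      rw [pderiv_comm3 1 2 v.1, pderiv_comm3 0 2 v.2.1, pderiv_comm3 0 1 v.2.2]
      ring
    · rintro ⟨⟨h1, h2, h3⟩, hd⟩
      replace h1 : w1.totalDegree ≤ k + 1 := h1
      replace h2 : w2.totalDegree ≤ k + 1 := h2
      replace h3 : w3.totalDegree ≤ k + 1 := h3
      simp only [div3] at hd
      set r := w3 - integ 2 (pderiv 2 w3) with hr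
      set a1 := integ 2 w2 with ha1
      set a2 := -(integ 2 w1) + integ 0 r with ha2
      have hr2 : pderiv 2 r = 0 := by
        rw [hr, map_sub, pderiv_integ, sub_self]
      have hrd : r.totalDegree ≤ k + 1 :=
        totalDegree_sub_le' _ _ h3
          ((totalDegree_integ_le 2 _).trans
            (by have := totalDegree_pderiv_le 2 w3 (d := k) h3; omega))
      refine ⟨(a1, a2, 0), ⟨(totalDegree_integ_le 2 w2).trans (by omega), ?_, by simp⟩, ?_⟩
      · refine (totalDegree_add _ _).trans (max_le ?_ ?_)
        · rw [totalDegree_neg]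
          exact (totalDegree_integ_le 2 w1).trans (by omega)
        · exact (totalDegree_integ_le 0 r).trans (by omega)
      · have hsum := congrArg (integ 2) hd
        rw [integ_add, integ_add, integ_zero] at hsum
        simp only [curl3, ha2, ha1, map_add, map_neg, map_zero, pderiv_integ,
          pderiv_integ_comm 0 2 (by decide), pderiv_integ_comm 2 1 (by decide),
          pderiv_integ_comm 2 0 (by decide), hr2, integ_zero]
        refine Prod.ext ?_ (Prod.ext ?_ ?_) <;> simp only
        · ring
        · ring
        · rw [hr]
          linear_combination hsum
  · -- (iv)
    intro q hq
    refine ⟨(integ 0 q, 0, 0), ⟨(totalDegree_integ_le 0 q).trans (by omega),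
      by simp, by simp⟩, ?_⟩
    simp [div3, pderiv_integ]
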